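/- Let T be a tournament with vertex set {1,...,n} and Seidel adjacency matrix S(T) (with s_ii=0, s_ij=1 if i→j, s_ij=-1 if j→i). A bipartition {X,Y} of {1,...,n} is a bi-join of T if and only if both submatrices S(T)[X,Y] and S(T)[Y,X] have rank at most 1. -/

import Mathlib

/-!
For `x ∈ X`, `y ∈ Y` the entry `S[x, y]` of the Seidel matrix is the sign `±1` of `x → y`.
A `±1` matrix has rank at most one iff it is an outer product of two `±1` vectors (one
direction because `2 × 2` minors of a rank-one matrix vanish), i.e. iff there are
`X₁ ⊆ X`, `Y₁ ⊆ Y` with `x → y ⟺ (x ∈ X₁ ⟺ y ∈ Y₁)`, which is the bi-join condition.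
For a tournament `S` is skew-symmetric, so `S[Y, X] = -S[X, Y]ᵀ` has the same rank.
-/

open Matrix Finset

/-- Rank of the submatrix of `A` with row indices in `X` and column indices in `Y`. -/
noncomputable def subRank {n : ℕ} {K : Type*} [Field K] (A : Matrix (Fin n) (Fin n) K)
    (X Y : Finset (Fin n)) : ℕ :=
  (A.submatrix (fun i : {a // a ∈ X} => i.1) (fun j : {a // a ∈ Y} => j.1)).rank

/-- The Seidel adjacency matrix of a tournament `T`: `0` on the diagonal, `1` if `i → j`
and `-1` if `j → i`. -/
def seidelT {n : ℕ} (T : Fin n → Fin n → Prop) [DecidableRel T] :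
    Matrix (Fin n) (Fin n) ℚ :=
  fun i j => if i = j then 0 else if T i j then 1 else -1

namespace Matrix

variable {m n R : Type*} [Fintype n] [CommRing R]

theorem rank_neg (A : Matrix m n R) : (-A).rank = A.rank := by
  rw [← neg_one_smul R A]
  exact rank_smul_of_mem_nonZeroDivisors A isUnit_one.neg.mem_nonZeroDivisors

theorem mul_apply_eq_of_rank_le_one [IsDomain R] {A : Matrix m n R} (hA : A.rank ≤ 1)
    (i i' : m) (j j' : n) : A i j * A i' j' = A i j' * A i' j := by
  by_contra hne
  have hdet : (A.submatrix ![i, i'] ![j, j']).det ≠ 0 := by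
    rwa [det_fin_two, submatrix_apply, submatrix_apply, submatrix_apply, submatrix_apply, Ne,
      sub_eq_zero]
  have hrank : (A.submatrix ![i, i'] ![j, j']).rank = 2 := by
    simpa using rank_of_det_ne_zero hdet
  have := rank_submatrix_le A ![i, i'] ![j, j']
  omega

end Matrix

section SignMatrix

variable {m n : Type*} (R : Type*) [CommRing R]

def pmOne (p : Prop) [Decidable p] : R := if p then 1 else -1

def signMatrix (r : m → n → Prop) [∀ i j, Decidable (r i j)] : Matrix m n R :=
  Matrix.of fun i j => pmOne R (r i j)

variable {R}

theorem pmOne_mul_pmOne (p q : Prop) [Decidable p] [Decidable q] :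
    pmOne R p * pmOne R q = pmOne R (p ↔ q) := by
  unfold pmOne; by_cases p <;> by_cases q <;> simp [*]

theorem pmOne_inj [Nontrivial R] (hR : ringChar R ≠ 2) {p q : Prop} [Decidable p]
    [Decidable q] : pmOne R p = pmOne R q ↔ (p ↔ q) := by
  have := Ring.neg_one_ne_one_of_char_ne_two hR
  unfold pmOne; by_cases p <;> by_cases q <;> simp [*, this.symm]

theorem rank_signMatrix_le_one_iff [Fintype n] [IsDomain R] (hR : ringChar R ≠ 2)
    (r : m → n → Prop) [∀ i j, Decidable (r i j)] :
    (signMatrix R r).rank ≤ 1 ↔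
      ∃ (p : m → Prop) (q : n → Prop), ∀ i j, r i j ↔ (p i ↔ q j) := by
  classical
  constructor
  · intro hr
    rcases isEmpty_or_nonempty m with _ | ⟨⟨i₀⟩⟩
    · exact ⟨fun _ => True, fun _ => True, fun i => isEmptyElim i⟩
    rcases isEmpty_or_nonempty n with _ | ⟨⟨j₀⟩⟩
    · exact ⟨fun _ => True, fun _ => True, fun _ j => isEmptyElim j⟩
    -- the minor on rows `i, i₀` and columns `j, j₀` expresses `r i j` via row `i₀`, column `j₀`
    refine ⟨fun i => r i j₀ ↔ r i₀ j₀, fun j => r i₀ j, fun i j => ?_⟩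
    have h := mul_apply_eq_of_rank_le_one hr i i₀ j j₀
    simp only [signMatrix, of_apply, pmOne_mul_pmOne, pmOne_inj hR] at h
    tauto
  · rintro ⟨p, q, hpq⟩
    have : signMatrix R r = vecMulVec (fun i => pmOne R (p i)) (fun j => pmOne R (q j)) := by
      ext i j
      simp only [signMatrix, of_apply, vecMulVec_apply, pmOne_mul_pmOne, hpq]
    exact this ▸ rank_vecMulVec_le _ _

end SignMatrix

theorem exists_subset_iff_exists_subtype_pred {α β : Type*} {X : Finset α} {Y : Finset β}
    (r : α → β → Prop) :
    (∃ X1 ⊆ X, ∃ Y1 ⊆ Y, ∀ x ∈ X, ∀ y ∈ Y, r x y ↔ (x ∈ X1 ↔ y ∈ Y1)) ↔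
      ∃ (p : {a // a ∈ X} → Prop) (q : {b // b ∈ Y} → Prop),
        ∀ (x : {a // a ∈ X}) (y : {b // b ∈ Y}), r x y ↔ (p x ↔ q y) := by
  classical
  constructor
  · rintro ⟨X1, -, Y1, -, h⟩
    exact ⟨fun x => x.1 ∈ X1, fun y => y.1 ∈ Y1, fun x y => h x x.2 y y.2⟩
  · rintro ⟨p, q, h⟩
    refine ⟨X.filter fun x => ∃ hx, p ⟨x, hx⟩, filter_subset _ _,
      Y.filter fun y => ∃ hy, q ⟨y, hy⟩, filter_subset _ _, fun x hx y hy => ?_⟩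
    simp [hx, hy, h ⟨x, hx⟩ ⟨y, hy⟩]

section BiJoin

variable {α : Type*} [DecidableEq α] {T : α → α → Prop} [DecidableRel T]

theorem filter_eq_and_filter_swap_eq_sdiff_iff (hT : ∀ i j : α, i ≠ j → (T i j ↔ ¬ T j i))
    {x : α} {Y Z : Finset α} (hx : x ∉ Y) (hZ : Z ⊆ Y) :
    (Y.filter (fun y => T x y) = Z ∧ Y.filter (fun y => T y x) = Y \ Z) ↔
      ∀ y ∈ Y, T x y ↔ y ∈ Z := by
  have hin : ∀ y ∈ Y, T y x ↔ ¬ T x y := fun y hy => hT y x (ne_of_mem_of_not_mem hy hx)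
  constructor
  · rintro ⟨hout, -⟩ y hy
    rw [← hout, mem_filter]
    exact (and_iff_right hy).symm
  · intro h
    constructor <;> ext y <;> by_cases hy : y ∈ Y
    · simp [hy, h y hy]
    · simpa [hy] using fun h => hy (hZ h)
    · simp [hy, h y hy, hin y hy]
    · simp [hy]

theorem filter_eq_sdiff_and_filter_swap_eq_iff (hT : ∀ i j : α, i ≠ j → (T i j ↔ ¬ T j i))
    {x : α} {Y Z : Finset α} (hx : x ∉ Y) (hZ : Z ⊆ Y) :
    (Y.filter (fun y => T x y) = Y \ Z ∧ Y.filter (fun y => T y x) = Z) ↔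
      ∀ y ∈ Y, T x y ↔ y ∉ Z := by
  have h := filter_eq_and_filter_swap_eq_sdiff_iff hT hx (sdiff_subset : Y \ Z ⊆ Y)
  rw [Finset.sdiff_sdiff_eq_self hZ] at h
  rw [h]
  exact forall₂_congr fun y hy => by rw [mem_sdiff, and_iff_right hy]

theorem biJoin_witness_iff (hT : ∀ i j : α, i ≠ j → (T i j ↔ ¬ T j i))
    {X Y X1 Y1 : Finset α} (hXY : Disjoint X Y) (hX1 : X1 ⊆ X) (hY1 : Y1 ⊆ Y) :
    ((∀ x ∈ X1, Y.filter (fun y => T x y) = Y1 ∧ Y.filter (fun y => T y x) = Y \ Y1) ∧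
        (∀ x ∈ X \ X1, Y.filter (fun y => T x y) = Y \ Y1 ∧ Y.filter (fun y => T y x) = Y1)) ↔
      ∀ x ∈ X, ∀ y ∈ Y, T x y ↔ (x ∈ X1 ↔ y ∈ Y1) := by
  have hX : ∀ x ∈ X, x ∉ Y := fun x hx => disjoint_left.1 hXY hx
  constructor
  · rintro ⟨hin, hout⟩ x hx y hy
    by_cases hx1 : x ∈ X1
    · simpa [hx1] using
        (filter_eq_and_filter_swap_eq_sdiff_iff hT (hX x hx) hY1).1 (hin x hx1) y hy
    · simpa [hx1] using (filter_eq_sdiff_and_filter_swap_eq_iff hT (hX x hx) hY1).1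
        (hout x (mem_sdiff.2 ⟨hx, hx1⟩)) y hy
  · intro h
    refine ⟨fun x hx1 => ?_, fun x hx => ?_⟩
    · refine (filter_eq_and_filter_swap_eq_sdiff_iff hT (hX x (hX1 hx1)) hY1).2 fun y hy => ?_
      simpa [hx1] using h x (hX1 hx1) y hy
    · obtain ⟨hx, hx1⟩ := mem_sdiff.1 hx
      refine (filter_eq_sdiff_and_filter_swap_eq_iff hT (hX x hx) hY1).2 fun y hy => ?_
      simpa [hx1] using h x hx y hy

end BiJoin

section Seidel

variable {n : ℕ} {T : Fin n → Fin n → Prop} [DecidableRel T]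

theorem seidelT_transpose (hT : ∀ i j : Fin n, i ≠ j → (T i j ↔ ¬ T j i)) :
    (seidelT T)ᵀ = -seidelT T := by
  ext i j
  by_cases hij : i = j
  · simp [seidelT, hij]
  · rw [transpose_apply, neg_apply]
    simp only [seidelT, if_neg hij, if_neg (Ne.symm hij), hT j i (Ne.symm hij)]
    by_cases h : T i j <;> simp [h]

theorem subRank_transpose {K : Type*} [Field K] (A : Matrix (Fin n) (Fin n) K)
    (X Y : Finset (Fin n)) : subRank Aᵀ X Y = subRank A Y X := by
  rw [subRank, subRank, ← transpose_submatrix, rank_transpose]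

theorem subRank_neg {K : Type*} [Field K] (A : Matrix (Fin n) (Fin n) K)
    (X Y : Finset (Fin n)) : subRank (-A) X Y = subRank A X Y :=
  Matrix.rank_neg _

theorem subRank_seidelT_comm (hT : ∀ i j : Fin n, i ≠ j → (T i j ↔ ¬ T j i))
    (X Y : Finset (Fin n)) : subRank (seidelT T) Y X = subRank (seidelT T) X Y := by
  rw [← subRank_transpose, seidelT_transpose hT, subRank_neg]

theorem subRank_seidelT_eq_rank_signMatrix {X Y : Finset (Fin n)} (hXY : Disjoint X Y) :
    subRank (seidelT T) X Y =
      (signMatrix ℚ fun (x : {a // a ∈ X}) (y : {a // a ∈ Y}) => T x y).rank := by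
  refine congrArg Matrix.rank (ext fun x y => ?_)
  have hxy : (x : Fin n) ≠ y := fun h => disjoint_left.1 hXY x.2 (h ▸ y.2)
  simp [seidelT, signMatrix, pmOne, hxy]

end Seidel

theorem tournament_bijoin_iff_HL_bipartition_seidel_general {n : ℕ}
    (T : Fin n → Fin n → Prop) [DecidableRel T]
    (hT : ∀ i j : Fin n, i ≠ j → (T i j ↔ ¬ T j i))
    (X Y : Finset (Fin n))
    (hD : Disjoint X Y) :
    (∃ X1 ⊆ X, ∃ Y1 ⊆ Y,
        (∀ x ∈ X1, Y.filter (fun y => T x y) = Y1 ∧ Y.filter (fun y => T y x) = Y \ Y1) ∧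
        (∀ x ∈ X \ X1, Y.filter (fun y => T x y) = Y \ Y1 ∧ Y.filter (fun y => T y x) = Y1)) ↔
      subRank (seidelT T) X Y ≤ 1 ∧ subRank (seidelT T) Y X ≤ 1 := by
  rw [subRank_seidelT_comm hT X Y, and_self, subRank_seidelT_eq_rank_signMatrix hD,
    rank_signMatrix_le_one_iff (by simp [ringChar.eq_zero]),
    ← exists_subset_iff_exists_subtype_pred]
  exact exists_congr fun X1 => and_congr_right fun hX1 => exists_congr fun Y1 =>
    and_congr_right fun hY1 => biJoin_witness_iff hT hD hX1 hY1

/-- A bipartition `{X, Y}` of the vertex set of a tournament `T` is a bi-join of `T` if and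
only if both off-diagonal blocks `S(T)[X,Y]` and `S(T)[Y,X]` of the Seidel adjacency matrix
have rank at most `1`. -/
theorem tournament_bijoin_iff_HL_bipartition_seidel {n : ℕ}
    (T : Fin n → Fin n → Prop) [DecidableRel T]
    (hT : ∀ i j : Fin n, i ≠ j → (T i j ↔ ¬ T j i))
    (X Y : Finset (Fin n)) (hX : X.Nonempty) (hY : Y.Nonempty)
    (hD : Disjoint X Y) (hU : X ∪ Y = Finset.univ) :
    (∃ X1 ⊆ X, ∃ Y1 ⊆ Y,
        (∀ x ∈ X1, Y.filter (fun y => T x y) = Y1 ∧ Y.filter (fun y => T y x) = Y \ Y1) ∧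
        (∀ x ∈ X \ X1, Y.filter (fun y => T x y) = Y \ Y1 ∧ Y.filter (fun y => T y x) = Y1)) ↔
      subRank (seidelT T) X Y ≤ 1 ∧ subRank (seidelT T) Y X ≤ 1 :=
  tournament_bijoin_iff_HL_bipartition_seidel_general T hT X Y hD
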